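/- arXiv:1902.03840 — 5 statements merged into one kernel-verified Lean document; each statement's English description precedes it below -/
import Mathlib

section
/- Let A ∈ S_{d,K} and C ∈ R^{d×d} symmetric positive semidefinite such that AᵀC²A is invertible. If ⟨CA(AᵀC²A)^{−1/2} − A, CA⟩ = 0 (Frobenius inner product), then (I_d − AAᵀ)CA = 0. -/
/-!
Put `B = C A` and `S = (Bᵀ B)^{1/2}`. Since `(B S⁻¹)ᵀ B = S`, the hypothesis says
`tr S = tr (Aᵀ B)`. For an isometry `A` one computes
`tr ((A S - B) S⁻¹ (A S - B)ᵀ) = 2 tr S - tr (Aᵀ B) - tr (Bᵀ A) = 0`, and as `S⁻¹` is positive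
definite this forces `B = A S`; hence `(1 - A Aᵀ) B = A S - A (Aᵀ A) S = 0`.
-/

open Matrix

open scoped ComplexOrder in
/-- The old `Matrix.PosSemidef.sqrt` (Mathlib, Dec 2024), removed since. -/
noncomputable def Matrix.PosSemidef.sqrt {n 𝕜 : Type*} [Fintype n] [RCLike 𝕜] [DecidableEq n]
    {A : Matrix n n 𝕜} (hA : A.PosSemidef) : Matrix n n 𝕜 :=
  hA.1.eigenvectorUnitary.1 * diagonal ((↑) ∘ (√·) ∘ hA.1.eigenvalues) *
    (star hA.1.eigenvectorUnitary : Matrix n n 𝕜)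

open scoped MatrixOrder ComplexOrder

namespace Matrix

variable {m n 𝕜 : Type*} [Fintype m] [Fintype n]

lemma trace_transpose_mul_eq_sum_sum {α : Type*} [AddCommMonoid α] [Mul α] (X Y : Matrix m n α) :
    (Xᵀ * Y).trace = ∑ i, ∑ j, X i j * Y i j := by
  simp only [trace, diag, mul_apply, transpose_apply]
  exact Finset.sum_comm

variable [DecidableEq n] [RCLike 𝕜]

namespace PosSemidef

variable {A : Matrix n n 𝕜} (hA : A.PosSemidef)

lemma sqrt_mul_self : hA.sqrt * hA.sqrt = A := by
  set U : Matrix n n 𝕜 := hA.1.eigenvectorUnitary.1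
  set D : Matrix n n 𝕜 := diagonal ((↑) ∘ (√·) ∘ hA.1.eigenvalues)
  have hU : star U * U = 1 := Unitary.coe_star_mul_self _
  have hD : D * D = diagonal (RCLike.ofReal ∘ hA.1.eigenvalues) := by
    rw [diagonal_mul_diagonal]
    congr 1; funext i
    simp only [Function.comp, ← RCLike.ofReal_mul, Real.mul_self_sqrt (hA.eigenvalues_nonneg i)]
  calc hA.sqrt * hA.sqrt = U * D * (star U * U) * D * star U := by
        simp only [sqrt, U, D, Matrix.mul_assoc]
    _ = A := by
        rw [hU, Matrix.mul_one, Matrix.mul_assoc U D D, hD]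
        exact hA.1.spectral_theorem.symm

lemma posSemidef_sqrt : hA.sqrt.PosSemidef := by
  have hD : (diagonal ((↑) ∘ (√·) ∘ hA.1.eigenvalues) : Matrix n n 𝕜).PosSemidef :=
    posSemidef_diagonal_iff.mpr fun i ↦ RCLike.ofReal_nonneg.mpr (Real.sqrt_nonneg _)
  simpa [sqrt, star_eq_conjTranspose] using hD.mul_mul_conjTranspose_same hA.1.eigenvectorUnitary.1

end PosSemidef

lemma PosDef.posDef_sqrt {A : Matrix n n 𝕜} (hA : A.PosDef) : hA.posSemidef.sqrt.PosDef := by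
  refine hA.posSemidef.posSemidef_sqrt.posDef_iff_det_ne_zero.mpr fun h0 ↦ hA.det_pos.ne' ?_
  rw [← hA.posSemidef.sqrt_mul_self, det_mul, h0, zero_mul]

lemma PosDef.eq_zero_of_trace_mul_mul_conjTranspose_eq_zero {S : Matrix n n 𝕜} (hS : S.PosDef)
    {X : Matrix m n 𝕜} (h : (X * S * Xᴴ).trace = 0) : X = 0 := by
  obtain ⟨R, hR, rfl⟩ := CStarAlgebra.isStrictlyPositive_iff_eq_star_mul_self.mp
    hS.isStrictlyPositive
  have hXR : X * Rᴴ = 0 := by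
    rw [← trace_mul_conjTranspose_self_eq_zero_iff, conjTranspose_mul, conjTranspose_conjTranspose]
    simpa [Matrix.mul_assoc, star_eq_conjTranspose] using h
  have hRdet : IsUnit Rᴴ.det := (isUnit_iff_isUnit_det _).mp (star_eq_conjTranspose R ▸ hR.star)
  rw [← mul_nonsing_inv_cancel_right _ X hRdet, hXR, Matrix.zero_mul]

lemma eq_mul_of_trace_eq_trace_conjTranspose_mul {A B : Matrix m n 𝕜} {S : Matrix n n 𝕜}
    (hA : Aᴴ * A = 1) (hS : S.PosDef) (hSB : S * S = Bᴴ * B)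
    (htr : S.trace = (Aᴴ * B).trace) : B = A * S := by
  have hdet : IsUnit S.det := (isUnit_iff_isUnit_det S).mp hS.isUnit
  have htr' : (Bᴴ * A).trace = S.trace := by
    rw [← conjTranspose_conjTranspose A, ← conjTranspose_mul, trace_conjTranspose, ← htr,
      ← trace_conjTranspose, hS.isHermitian.eq]
  have hgram : (A * S - B)ᴴ * (A * S - B) = 2 • (S * S) - S * (Aᴴ * B) - Bᴴ * A * S := by
    rw [conjTranspose_sub, conjTranspose_mul, hS.isHermitian.eq]
    calc (S * Aᴴ - Bᴴ) * (A * S - B) = S * (Aᴴ * A) * S - S * (Aᴴ * B) - Bᴴ * A * S + Bᴴ * B := by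
          simp only [Matrix.sub_mul, Matrix.mul_sub, Matrix.mul_assoc]; abel
      _ = _ := by rw [hA, Matrix.mul_one, ← hSB, two_smul]; abel
  have hzero : ((A * S - B) * S⁻¹ * (A * S - B)ᴴ).trace = 0 := by
    rw [trace_mul_comm, ← Matrix.mul_assoc, hgram, sub_mul, sub_mul, trace_sub, trace_sub,
      smul_mul, mul_nonsing_inv_cancel_right _ _ hdet, mul_nonsing_inv_cancel_right _ _ hdet,
      trace_smul, trace_mul_cycle, nonsing_inv_mul _ hdet, Matrix.one_mul, htr', ← htr, two_smul]
    abel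
  exact (sub_eq_zero.mp (hS.inv.eq_zero_of_trace_mul_mul_conjTranspose_eq_zero hzero)).symm

end Matrix

theorem stmt8 {d K : ℕ} (A : Matrix (Fin d) (Fin K) ℝ) (C : Matrix (Fin d) (Fin d) ℝ)
    (hA : Aᵀ * A = 1) (hC : C.PosSemidef)
    (hP : (Aᵀ * C * C * A).PosDef)
    (h : ∑ i, ∑ j, ((C * A * (Matrix.PosSemidef.sqrt hP.posSemidef)⁻¹ - A) i j) * ((C * A) i j) = 0) :
    (1 - A * Aᵀ) * C * A = 0 := by
  set S := hP.posSemidef.sqrt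
  have hS : S.PosDef := hP.posDef_sqrt
  have hdet : IsUnit S.det := (isUnit_iff_isUnit_det S).mp hS.isUnit
  have hSt : Sᵀ = S := by simpa [conjTranspose_eq_transpose_of_trivial] using hS.isHermitian.eq
  have hCt : Cᵀ = C := by simpa [conjTranspose_eq_transpose_of_trivial] using hC.isHermitian.eq
  have hSB : S * S = (C * A)ᵀ * (C * A) := by
    rw [hP.posSemidef.sqrt_mul_self, transpose_mul, hCt]
    simp only [Matrix.mul_assoc]
  have htr : S.trace = (Aᵀ * (C * A)).trace := by
    rw [← trace_transpose_mul_eq_sum_sum, transpose_sub, Matrix.sub_mul, trace_sub,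
      transpose_mul, transpose_nonsing_inv, hSt, Matrix.mul_assoc, ← hSB,
      nonsing_inv_mul_cancel_left _ _ hdet, sub_eq_zero] at h
    exact h
  have hCA : C * A = A * S := by
    simp only [← conjTranspose_eq_transpose_of_trivial] at hA hSB htr
    exact eq_mul_of_trace_eq_trace_conjTranspose_mul hA hS hSB htr
  rw [Matrix.sub_mul, Matrix.sub_mul, Matrix.one_mul, Matrix.mul_assoc _ C, hCA,
    Matrix.mul_assoc A, ← Matrix.mul_assoc Aᵀ, hA, Matrix.one_mul, sub_self]
end

section
/- Let A ∈ S_{d,K}, y_1,...,y_N ∈ R^d with (I − AAᵀ)y_i ≠ 0 for all i, C_A := Σ_i y_iy_iᵀ/‖(I−AAᵀ)y_i‖, S_A := AᵀC_AA invertible, and let Ã := polar factor of C_A A S_A^{−1}, so that ÃÃᵀ = C_A A (AᵀC_A²A)^{−1}AᵀC_A. Then Σ_{i=1}^N ⟨AAᵀy_i, (I − ÃÃᵀ)y_i⟩ / ‖(I − AAᵀ)y_i‖ = tr(C_A AAᵀ(I − ÃÃᵀ)) = 0. -/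
open Matrix

/-- Euclidean norm of a vector. -/
noncomputable def evn {d : ℕ} (v : Fin d → ℝ) : ℝ := Real.sqrt (∑ i, (v i) ^ 2)

lemma trace_vecMulVec_mul {d : ℕ} (u : Fin d → ℝ) (M : Matrix (Fin d) (Fin d) ℝ) :
    trace (vecMulVec u u * M) = u ⬝ᵥ M.mulVec u := by
  simp [Matrix.trace, Matrix.mul_apply, Matrix.vecMulVec_apply, dotProduct, mulVec,
    Finset.mul_sum, Matrix.diag]
  rw [Finset.sum_comm]
  congr 1; ext k; congr 1; ext j; ring

lemma sum_eq_dot {d K : ℕ} (A B : Matrix (Fin d) (Fin K) ℝ) (u : Fin d → ℝ) :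
    ∑ j, A.mulVec (Aᵀ.mulVec u) j * (u - B.mulVec (Bᵀ.mulVec u)) j
      = u ⬝ᵥ (A * Aᵀ * (1 - B * Bᵀ)).mulVec u := by
  have h1 : A.mulVec (Aᵀ.mulVec u) = (A * Aᵀ).mulVec u := by rw [mulVec_mulVec]
  have h2 : u - B.mulVec (Bᵀ.mulVec u) = (1 - B * Bᵀ).mulVec u := by
    rw [sub_mulVec, one_mulVec, mulVec_mulVec]
  have h3 : (∑ j, A.mulVec (Aᵀ.mulVec u) j * (u - B.mulVec (Bᵀ.mulVec u)) j)
      = ((A * Aᵀ).mulVec u) ⬝ᵥ ((1 - B * Bᵀ).mulVec u) := by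
    rw [h1, h2]; rfl
  have h4 : (A * Aᵀ) *ᵥ u = u ᵥ* (A * Aᵀ)ᵀ := by rw [vecMul_transpose]
  rw [h3, h4, transpose_mul, transpose_transpose, ← dotProduct_mulVec, mulVec_mulVec]

theorem stmt14 {d K N : ℕ} (A B : Matrix (Fin d) (Fin K) ℝ)
    (y : Fin N → Fin d → ℝ) (C : Matrix (Fin d) (Fin d) ℝ)
    (hA : Aᵀ * A = 1)
    (hy : ∀ i, y i - A.mulVec (Aᵀ.mulVec (y i)) ≠ 0)
    (hC : C = ∑ i, (evn (y i - A.mulVec (Aᵀ.mulVec (y i))))⁻¹ • vecMulVec (y i) (y i))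
    (hinv : IsUnit (Aᵀ * C * C * A))
    (hBB : B * Bᵀ = C * A * (Aᵀ * C * C * A)⁻¹ * Aᵀ * C) :
    (∑ i, (∑ j, A.mulVec (Aᵀ.mulVec (y i)) j * (y i - B.mulVec (Bᵀ.mulVec (y i))) j)
        / evn (y i - A.mulVec (Aᵀ.mulVec (y i))))
      = (C * A * Aᵀ * (1 - B * Bᵀ)).trace ∧
    (C * A * Aᵀ * (1 - B * Bᵀ)).trace = 0 := by
  constructor
  · have hrw : C * A * Aᵀ * (1 - B * Bᵀ) = C * (A * Aᵀ * (1 - B * Bᵀ)) := by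
      simp only [Matrix.mul_assoc]
    rw [hrw, hC, Finset.sum_mul, trace_sum]
    refine Finset.sum_congr rfl fun i _ => ?_
    rw [Matrix.smul_mul, trace_smul, trace_vecMulVec_mul, smul_eq_mul,
      ← sum_eq_dot A B (y i), div_eq_inv_mul]
  · have hdet : IsUnit (Aᵀ * C * C * A).det := (Matrix.isUnit_iff_isUnit_det _).mp hinv
    rw [mul_sub, mul_one, trace_sub, hBB, trace_mul_comm (C * A) Aᵀ]
    have e2 : C * A * Aᵀ * (C * A * (Aᵀ * C * C * A)⁻¹ * Aᵀ * C)
        = (C * A) * (Aᵀ * C * A * ((Aᵀ * C * C * A)⁻¹ * (Aᵀ * C))) := by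
      simp only [Matrix.mul_assoc]
    rw [e2, trace_mul_comm (C * A)]
    have e3 : Aᵀ * C * A * ((Aᵀ * C * C * A)⁻¹ * (Aᵀ * C)) * (C * A)
        = (Aᵀ * C * A) * ((Aᵀ * C * C * A)⁻¹ * (Aᵀ * C * C * A)) := by
      simp only [Matrix.mul_assoc]
    rw [e3, Matrix.nonsing_inv_mul _ hdet, mul_one]
    simp only [Matrix.mul_assoc, sub_self]
end

section
/- Let A ∈ S_{d,K}, A⊥ a matrix whose columns form an orthonormal basis of the orthogonal complement of the range of A, and C ∈ R^{d×d}. Suppose ‖(I − AAᵀ)CA‖² > Σ_{k∈𝒦} ‖(I − AAᵀ)C y_k‖ for vectors y_k with y_k = AAᵀy_k. Then the direction H := (I − AAᵀ)CA satisfies −⟨(I − AAᵀ)CA, H⟩ + Σ_{k∈𝒦} ‖(AHᵀ + HAᵀ)y_k‖ < 0. -/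
open Matrix

/-- Frobenius norm of a real matrix. -/
noncomputable def frob {m n : ℕ} (M : Matrix (Fin m) (Fin n) ℝ) : ℝ :=
  Real.sqrt (∑ i, ∑ j, (M i j) ^ 2)

/-- At an anchor point, if `‖(I - AAᵀ)CA‖² > ∑ₖ ‖(I - AAᵀ)C yₖ‖`, then `H = (I - AAᵀ)CA`
is a descent direction for the one-sided directional derivative of `E`. -/
theorem stmt17 {d K κ : ℕ} (A : Matrix (Fin d) (Fin K) ℝ) (C : Matrix (Fin d) (Fin d) ℝ)
    (y : Fin κ → Fin d → ℝ)
    (hA : Aᵀ * A = 1)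
    (hy : ∀ k, A.mulVec (Aᵀ.mulVec (y k)) = y k)
    (h : frob ((1 - A * Aᵀ) * C * A) ^ 2
          > ∑ k, evn ((1 - A * Aᵀ).mulVec (C.mulVec (y k)))) :
    -(∑ i, ∑ j, ((1 - A * Aᵀ) * C * A : Matrix (Fin d) (Fin K) ℝ) i j *
        ((1 - A * Aᵀ) * C * A : Matrix (Fin d) (Fin K) ℝ) i j)
      + ∑ k, evn ((A * ((1 - A * Aᵀ) * C * A)ᵀ
          + ((1 - A * Aᵀ) * C * A) * Aᵀ).mulVec (y k)) < 0 := by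
  set P : Matrix (Fin d) (Fin d) ℝ := 1 - A * Aᵀ with hP
  set H : Matrix (Fin d) (Fin K) ℝ := P * C * A with hH
  have hPy : ∀ k, P.mulVec (y k) = 0 := by
    intro k
    simp [hP, sub_mulVec, Matrix.one_mulVec, ← Matrix.mulVec_mulVec, hy k]
  have key : ∀ k, (A * Hᵀ + H * Aᵀ).mulVec (y k)
      = P.mulVec (C.mulVec (y k)) := by
    intro k
    have h1 : (A * Hᵀ).mulVec (y k) = 0 := by
      rw [← Matrix.mulVec_mulVec]
      have : Hᵀ.mulVec (y k) = 0 := by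
        rw [hH, Matrix.transpose_mul, Matrix.transpose_mul, ← Matrix.mulVec_mulVec,
          ← Matrix.mulVec_mulVec]
        have hPsymm : Pᵀ = P := by
          simp [hP, Matrix.transpose_sub, Matrix.transpose_mul]
        rw [hPsymm, hPy k]
        simp
      rw [this]
      simp
    have h2 : (H * Aᵀ).mulVec (y k) = P.mulVec (C.mulVec (y k)) := by
      rw [hH, ← Matrix.mulVec_mulVec, Matrix.mul_assoc, ← Matrix.mulVec_mulVec,
        ← Matrix.mulVec_mulVec, hy k]
    rw [Matrix.add_mulVec, h1, h2, zero_add]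
  have hfrob : frob H ^ 2 = ∑ i, ∑ j, H i j * H i j := by
    rw [frob, Real.sq_sqrt (by positivity)]
    simp [sq]
  have hsum : (∑ k, evn ((A * Hᵀ + H * Aᵀ).mulVec (y k)))
      = ∑ k, evn (P.mulVec (C.mulVec (y k))) := by
    apply Finset.sum_congr rfl
    intro k _
    rw [key k]
  rw [hsum, ← hfrob]
  linarith
end

section
/- Let A ∈ S_{d,K} with (I − AAᵀ)y_i ≠ 0 for all i, C_A := Σ_i y_iy_iᵀ/‖(I−AAᵀ)y_i‖, S_A := AᵀC_AA invertible with eigendecomposition S_A = QΛQᵀ. If A satisfies the fixed-point equation A(AᵀC_AA) = C_A A, then the columns of à := AQ are eigenvectors of C_à = C_A with the positive eigenvalues on the diagonal of Λ, i.e., C_A à = à Λ. -/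
open Matrix

theorem stmt18 {d K N : ℕ} (A Q : Matrix (Fin d) (Fin K) ℝ) (hKd : K ≤ d) -- sizes
    (y : Fin N → Fin d → ℝ) (C : Matrix (Fin d) (Fin d) ℝ)
    (QK : Matrix (Fin K) (Fin K) ℝ) (lam : Fin K → ℝ)
    (hA : Aᵀ * A = 1)
    (hy : ∀ i, y i - A.mulVec (Aᵀ.mulVec (y i)) ≠ 0)
    (hC : C = ∑ i, (evn (y i - A.mulVec (Aᵀ.mulVec (y i))))⁻¹ • vecMulVec (y i) (y i))
    (hfix : A * (Aᵀ * C * A) = C * A)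
    (hQ : QKᵀ * QK = 1)
    (heig : Aᵀ * C * A = QK * Matrix.diagonal lam * QKᵀ)
    (hpos : ∀ k, 0 < lam k) :
    C * (A * QK) = (A * QK) * Matrix.diagonal lam := by
  calc C * (A * QK) = (A * (Aᵀ * C * A)) * QK := by rw [hfix, Matrix.mul_assoc]
    _ = A * (QK * Matrix.diagonal lam * (QKᵀ * QK)) := by
        rw [heig]; simp only [Matrix.mul_assoc]
    _ = (A * QK) * Matrix.diagonal lam := by rw [hQ, Matrix.mul_one, Matrix.mul_assoc]
end

section
/- Let A ∈ S_{d,K} with (I−AAᵀ)y_i ≠ 0 for all i and C_A, S_A as usual with S_A invertible. Then the matrix M := A + (I − AAᵀ)C_A A S_A^{−1} satisfies MᵀM = I_K + S_A^{−1}AᵀC_A(I−AAᵀ)²C_AAS_A^{−1}, all eigenvalues of MᵀM are ≥ 1, and in particular M has full column rank. -/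
open Matrix

theorem stmt19 {d K N : ℕ} (A : Matrix (Fin d) (Fin K) ℝ)
    (y : Fin N → Fin d → ℝ) (C : Matrix (Fin d) (Fin d) ℝ) (S : Matrix (Fin K) (Fin K) ℝ)
    (hA : Aᵀ * A = 1)
    (hy : ∀ i, y i - A.mulVec (Aᵀ.mulVec (y i)) ≠ 0)
    (hC : C = ∑ i, (evn (y i - A.mulVec (Aᵀ.mulVec (y i))))⁻¹ • vecMulVec (y i) (y i))
    (hS : S = Aᵀ * C * A) (hSinv : IsUnit S) :
    (A + (1 - A * Aᵀ) * C * A * S⁻¹)ᵀ * (A + (1 - A * Aᵀ) * C * A * S⁻¹)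
        = 1 + S⁻¹ * Aᵀ * C * ((1 - A * Aᵀ) * (1 - A * Aᵀ)) * C * A * S⁻¹ ∧
    ((A + (1 - A * Aᵀ) * C * A * S⁻¹)ᵀ * (A + (1 - A * Aᵀ) * C * A * S⁻¹) - 1).PosSemidef ∧
    (A + (1 - A * Aᵀ) * C * A * S⁻¹).rank = K := by
  set P : Matrix (Fin d) (Fin d) ℝ := 1 - A * Aᵀ with hP
  have hCsym : Cᵀ = C := by
    subst hC
    rw [transpose_sum]
    refine Finset.sum_congr rfl fun i _ => ?_
    rw [transpose_smul]
    congr 1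
    ext a b
    simp [vecMulVec_apply, mul_comm]
  have hPsym : Pᵀ = P := by
    simp [hP, transpose_sub, transpose_mul]
  have hAP : Aᵀ * P = 0 := by
    simp [hP, Matrix.mul_sub, ← Matrix.mul_assoc, hA]
  have hPA : P * A = 0 := by
    have := congrArg transpose hAP
    simpa [transpose_mul, hPsym] using this
  have hSsym : Sᵀ = S := by
    subst hS; simp [transpose_mul, hCsym, Matrix.mul_assoc]
  have hSinvT : (S⁻¹)ᵀ = S⁻¹ := by
    rw [transpose_nonsing_inv, hSsym]
  have key : (A + P * C * A * S⁻¹)ᵀ * (A + P * C * A * S⁻¹)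
      = 1 + S⁻¹ * Aᵀ * C * (P * P) * C * A * S⁻¹ := by
    have expand : (A + P * C * A * S⁻¹)ᵀ * (A + P * C * A * S⁻¹)
        = Aᵀ * A + (Aᵀ * P) * (C * A * S⁻¹)
          + (S⁻¹ * Aᵀ * C) * (P * A) + S⁻¹ * Aᵀ * C * (P * P) * C * A * S⁻¹ := by
      simp only [transpose_add, transpose_mul, hCsym, hPsym, hSinvT, Matrix.add_mul,
        Matrix.mul_add, Matrix.mul_assoc]
      abel
    rw [expand, hA, hAP, hPA, Matrix.zero_mul, Matrix.mul_zero, add_zero, add_zero]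
  have hBt : (P * C * A * S⁻¹)ᵀ = S⁻¹ * Aᵀ * C * P := by
    simp [transpose_mul, hCsym, hPsym, hSinvT, Matrix.mul_assoc]
  have hMM1 : (A + P * C * A * S⁻¹)ᵀ * (A + P * C * A * S⁻¹) - 1
      = (P * C * A * S⁻¹)ᵀ * (P * C * A * S⁻¹) := by
    rw [key, hBt, add_sub_cancel_left]
    simp only [Matrix.mul_assoc]
  have hpsd : ((A + P * C * A * S⁻¹)ᵀ * (A + P * C * A * S⁻¹) - 1).PosSemidef := by
    rw [hMM1]
    have := posSemidef_conjTranspose_mul_self (P * C * A * S⁻¹)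
    rwa [conjTranspose_eq_transpose_of_trivial] at this
  refine ⟨by rw [key], hpsd, ?_⟩
  have hposdef : ((A + P * C * A * S⁻¹)ᵀ * (A + P * C * A * S⁻¹)).PosDef := by
    have h1 : ((A + P * C * A * S⁻¹)ᵀ * (A + P * C * A * S⁻¹))
        = 1 + ((A + P * C * A * S⁻¹)ᵀ * (A + P * C * A * S⁻¹) - 1) := by abel
    rw [h1]
    exact Matrix.PosDef.add_posSemidef Matrix.PosDef.one hpsd
  have hunit : IsUnit ((A + P * C * A * S⁻¹)ᵀ * (A + P * C * A * S⁻¹)) := hposdef.isUnit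
  have := Matrix.rank_transpose_mul_self (A + P * C * A * S⁻¹)
  rw [Matrix.rank_of_isUnit _ hunit] at this
  simpa using this.symm
end
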